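/- arXiv:0803.3270 — 4 statements merged into one kernel-verified Lean document; each statement's English description precedes it below -/
import Mathlib

section
/- The map g ↦ (g⁻¹·∞, g⁻¹·0) from the semigroup S of SL(2,ℤ)-matrices with nonnegative entries to the set of positively oriented left primitive segments (i.e., ordered pairs (α,β) with -∞ ≤ α < β ≤ 0, both in P¹(ℚ), of the form (h(∞), h(0)) for some h ∈ GL(2,ℤ)) is a bijection. -/
/-- The action of an integer 2×2 matrix on `P¹(ℚ) = ℚ ∪ {∞}` by fractional
linear transformations, with `∞` encoded as `none`. -/
def flin (h : Matrix (Fin 2) (Fin 2) ℤ) : Option ℚ → Option ℚ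
  | none => if (h 1 0 : ℚ) = 0 then none else some ((h 0 0 : ℚ) / (h 1 0 : ℚ))
  | some x => if (h 1 0 : ℚ) * x + (h 1 1 : ℚ) = 0 then none
      else some (((h 0 0 : ℚ) * x + (h 0 1 : ℚ)) / ((h 1 0 : ℚ) * x + (h 1 1 : ℚ)))

/-- On left segments, `∞ = -∞` is smaller than every rational. -/
def oLT : Option ℚ → Option ℚ → Prop
  | none, none => False
  | none, some _ => True
  | some _, none => False
  | some x, some y => x < y

/-- `≤ 0` on `P¹(ℚ)` where `none = -∞`. -/
def oNonpos : Option ℚ → Prop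
  | none => True
  | some x => x ≤ 0

/-- The set of positively oriented left primitive segments: pairs `(α,β)` with
`-∞ ≤ α < β ≤ 0` of the form `(h(∞), h(0))` for some `h ∈ GL(2,ℤ)`. -/
def leftPrimitive : Set (Option ℚ × Option ℚ) :=
  {p | (∃ h : (Matrix (Fin 2) (Fin 2) ℤ)ˣ,
          p.1 = flin h.1 none ∧ p.2 = flin h.1 (some 0)) ∧
    oLT p.1 p.2 ∧ oNonpos p.1 ∧ oNonpos p.2}

/-!
Write `g = !![a, b; c, d]`, so that `g⁻¹·∞ = -d/c` and `g⁻¹·0 = -b/a`. Every point of `[-∞, 0]`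
is `-n/m` for a unique coprime pair `n, m ≥ 0`, and the rows of `g` are such pairs, whence
injectivity. Conversely, if `(P/Q, R/S)` is a Farey segment in `[-∞, 0]`, then `PQ ≤ 0` and
`RS ≤ 0`, so `PS` and `RQ` have the same sign and `|P||S| - |R||Q| = ±(PS - RQ) = ±1`; the
orientation `P/Q < R/S` forces the sign `+`, so `!![|S|, |R|; |Q|, |P|]` is a preimage.
-/

open Matrix

lemma abs_abs_sub_abs_of_mul_nonneg {α : Type*} [CommRing α] [LinearOrder α]
    [IsStrictOrderedRing α] {x y : α} (h : 0 ≤ x * y) : |(|x| - |y|)| = |x - y| := by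
  have hxy : |x| * |y| = x * y := by rw [← abs_mul, abs_of_nonneg h]
  rw [← sq_eq_sq_iff_abs_eq_abs]
  linear_combination sq_abs x + sq_abs y - 2 * hxy

lemma eq_of_isCoprime_of_mul_eq {n m n' m' : ℤ} (hn : 0 ≤ n) (hm : 0 ≤ m) (hn' : 0 ≤ n')
    (hm' : 0 ≤ m') (hc : IsCoprime n m) (hc' : IsCoprime n' m') (h : n * m' = n' * m) :
    n = n' ∧ m = m' := by
  obtain rfl : n = n' := Int.dvd_antisymm hn hn'
    (hc.dvd_of_dvd_mul_right ⟨m', h.symm⟩) (hc'.dvd_of_dvd_mul_right ⟨m, h⟩)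
  exact ⟨rfl, Int.dvd_antisymm hm hm' (hc.symm.dvd_of_dvd_mul_left ⟨n, h.trans (mul_comm _ _)⟩)
    (hc'.symm.dvd_of_dvd_mul_left ⟨n, h.symm.trans (mul_comm _ _)⟩)⟩

lemma Matrix.SpecialLinearGroup.det_fin_two_eq_one (g : SpecialLinearGroup (Fin 2) ℤ) :
    g 0 0 * g 1 1 - g 0 1 * g 1 0 = 1 := by
  rw [← det_fin_two, g.det_coe]

/-- The point `[p : q]` of `P¹(ℚ)`; `[p : 0] = ∞`. -/
def ratio (p q : ℤ) : Option ℚ := if (q : ℚ) = 0 then none else some (p / q)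

lemma flin_none (h : Matrix (Fin 2) (Fin 2) ℤ) : flin h none = ratio (h 0 0) (h 1 0) := rfl

lemma flin_some_zero (h : Matrix (Fin 2) (Fin 2) ℤ) :
    flin h (some 0) = ratio (h 0 1) (h 1 1) := by
  simp [flin, ratio]

lemma ratio_neg_neg (p q : ℤ) : ratio (-p) (-q) = ratio p q := by
  simp [ratio, neg_div_neg_eq]

lemma flin_inv_none (g : SpecialLinearGroup (Fin 2) ℤ) :
    flin (g⁻¹).1 none = ratio (-g 1 1) (g 1 0) := by
  rw [flin_none, SpecialLinearGroup.SL2_inv_expl, ← ratio_neg_neg]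
  simp

lemma flin_inv_some_zero (g : SpecialLinearGroup (Fin 2) ℤ) :
    flin (g⁻¹).1 (some 0) = ratio (-g 0 1) (g 0 0) := by
  rw [flin_some_zero, SpecialLinearGroup.SL2_inv_expl]
  simp

lemma mul_eq_mul_of_ratio_eq {p q p' q' : ℤ} (h : ratio p q = ratio p' q') :
    p * q' = p' * q := by
  unfold ratio at h
  by_cases hq : q = 0 <;> by_cases hq' : q' = 0 <;> simp_all [div_eq_div_iff]
  exact_mod_cast h

lemma mul_nonpos_of_oNonpos_ratio {p q : ℤ} (h : oNonpos (ratio p q)) : p * q ≤ 0 := by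
  unfold ratio at h
  by_cases hq : q = 0
  · simp [hq]
  · simp only [Int.cast_eq_zero, hq, if_false, oNonpos] at h
    have : ((p * q : ℤ) : ℚ) ≤ 0 := by
      rw [Int.cast_mul, ← div_mul_cancel₀ (p : ℚ) (Int.cast_ne_zero.2 hq), mul_assoc]
      exact mul_nonpos_of_nonpos_of_nonneg h (mul_self_nonneg _)
    exact_mod_cast this

lemma ratio_eq_ratio_neg_abs {p q : ℤ} (h : p * q ≤ 0) : ratio p q = ratio (-|p|) |q| := by
  rcases lt_trichotomy q 0 with hq | rfl | hq
  · rw [abs_of_neg hq, abs_of_nonneg (nonneg_of_mul_nonpos_left h hq), ratio_neg_neg]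
  · simp [ratio]
  · rw [abs_of_pos hq, abs_of_nonpos (nonpos_of_mul_nonpos_left h hq), neg_neg]

lemma oNonpos_ratio_neg {n m : ℤ} (hn : 0 ≤ n) (hm : 0 ≤ m) : oNonpos (ratio (-n) m) := by
  unfold ratio
  split_ifs
  · trivial
  · show ((-n : ℤ) : ℚ) / m ≤ 0
    exact div_nonpos_of_nonpos_of_nonneg (by simpa) (by simpa)

lemma oLT_ratio_neg {n m n' m' : ℤ} (hm : 0 ≤ m) (hn' : 0 ≤ n') (hm' : 0 ≤ m')
    (h : n' * m < n * m') : oLT (ratio (-n) m) (ratio (-n') m') := by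
  have hm'0 : (m' : ℚ) ≠ 0 := by
    rw [Int.cast_ne_zero]; rintro rfl; nlinarith
  rcases hm.eq_or_lt with rfl | hm0
  · simp [ratio, hm'0, oLT]
  · have hm0' : (0 : ℚ) < m := by exact_mod_cast hm0
    simp only [ratio, hm0'.ne', hm'0, if_false, oLT]
    rw [div_lt_div_iff₀ hm0' (lt_of_le_of_ne (by exact_mod_cast hm') hm'0.symm)]
    exact_mod_cast (by linarith : -n * m' < -n' * m)

lemma le_of_oLT_ratio_neg {n m n' m' : ℤ} (hn : 0 ≤ n) (hm : 0 ≤ m) (hm' : 0 ≤ m')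
    (h : oLT (ratio (-n) m) (ratio (-n') m')) : n' * m ≤ n * m' := by
  rcases hm.eq_or_lt with rfl | hm0
  · simpa using mul_nonneg hn hm'
  rcases hm'.eq_or_lt with rfl | hm'0
  · simp [ratio, hm0.ne', oLT] at h
  have hm0' : (0 : ℚ) < m := by exact_mod_cast hm0
  have hm'0' : (0 : ℚ) < m' := by exact_mod_cast hm'0
  simp only [ratio, hm0'.ne', hm'0'.ne', if_false, oLT] at h
  rw [div_lt_div_iff₀ hm0' hm'0'] at h
  have : -n * m' < -n' * m := by exact_mod_cast h
  linarith

def invSegment (g : SpecialLinearGroup (Fin 2) ℤ) : Option ℚ × Option ℚ :=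
  (flin (g⁻¹).1 none, flin (g⁻¹).1 (some 0))

lemma invSegment_eq (g : SpecialLinearGroup (Fin 2) ℤ) :
    invSegment g = (ratio (-g 1 1) (g 1 0), ratio (-g 0 1) (g 0 0)) := by
  rw [invSegment, flin_inv_none, flin_inv_some_zero]

lemma mapsTo_invSegment :
    Set.MapsTo invSegment {g | ∀ i j, 0 ≤ g i j} leftPrimitive := by
  intro g hg
  have hdet := g.det_fin_two_eq_one
  refine ⟨⟨SpecialLinearGroup.toGL g⁻¹, rfl, rfl⟩, ?_⟩
  rw [invSegment_eq]
  exact ⟨oLT_ratio_neg (hg 1 0) (hg 0 1) (hg 0 0) (by linarith),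
    oNonpos_ratio_neg (hg 1 1) (hg 1 0), oNonpos_ratio_neg (hg 0 1) (hg 0 0)⟩

lemma injOn_invSegment : Set.InjOn invSegment {g | ∀ i j, 0 ≤ g i j} := by
  intro g hg g' hg' h
  simp only [invSegment_eq, Prod.mk.injEq] at h
  have hdet := g.det_fin_two_eq_one
  have hdet' := g'.det_fin_two_eq_one
  have h₁ := mul_eq_mul_of_ratio_eq h.1
  have h₀ := mul_eq_mul_of_ratio_eq h.2
  obtain ⟨h11, h10⟩ := eq_of_isCoprime_of_mul_eq (hg 1 1) (hg 1 0) (hg' 1 1) (hg' 1 0)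
    ⟨g 0 0, -g 0 1, by linarith⟩ ⟨g' 0 0, -g' 0 1, by linarith⟩ (by linarith)
  obtain ⟨h01, h00⟩ := eq_of_isCoprime_of_mul_eq (hg 0 1) (hg 0 0) (hg' 0 1) (hg' 0 0)
    ⟨-g 1 0, g 1 1, by linarith⟩ ⟨-g' 1 0, g' 1 1, by linarith⟩ (by linarith)
  ext i j
  fin_cases i <;> fin_cases j <;> assumption

lemma surjOn_invSegment : Set.SurjOn invSegment {g | ∀ i j, 0 ≤ g i j} leftPrimitive := by
  rintro ⟨α, β⟩ ⟨⟨h, hα', hβ'⟩, hlt, hα, hβ⟩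
  dsimp only at *
  subst hα' hβ'
  rw [flin_none, flin_some_zero] at *
  set P := h.1 0 0
  set Q := h.1 1 0
  set R := h.1 0 1
  set S := h.1 1 1
  have hPQ := mul_nonpos_of_oNonpos_ratio hα
  have hRS := mul_nonpos_of_oNonpos_ratio hβ
  rw [ratio_eq_ratio_neg_abs hPQ, ratio_eq_ratio_neg_abs hRS] at hlt ⊢
  have hdet : |P| * |S| - |R| * |Q| = 1 := by
    have habs : |P * S - R * Q| = 1 := by
      rw [← det_fin_two]; exact Int.isUnit_iff_abs_eq.1 (isUnits_det_units h)
    rw [← abs_abs_sub_abs_of_mul_nonneg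
      ((mul_nonneg_of_nonpos_of_nonpos hPQ hRS).trans_eq (by ring)), abs_mul, abs_mul,
      abs_of_nonneg (sub_nonneg.2 (le_of_oLT_ratio_neg (abs_nonneg P) (abs_nonneg Q)
        (abs_nonneg S) hlt))] at habs
    exact habs
  refine ⟨(⟨!![|S|, |R|; |Q|, |P|], by rw [det_fin_two_of]; linarith⟩ :
    SpecialLinearGroup (Fin 2) ℤ), ?_, ?_⟩
  · intro i j
    fin_cases i <;> fin_cases j <;> simp
  · exact invSegment_eq _

/-- `g ↦ (g⁻¹·∞, g⁻¹·0)` is a bijection from the semigroup `S` of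
`SL(2,ℤ)`-matrices with nonnegative entries onto the set of positively oriented
left primitive segments. -/
theorem stmt1 :
    Set.BijOn
      (fun g : Matrix.SpecialLinearGroup (Fin 2) ℤ =>
        (flin (g⁻¹).1 none, flin (g⁻¹).1 (some 0)))
      {g | ∀ i j, 0 ≤ g.1 i j}
      leftPrimitive :=
  ⟨mapsTo_invSegment, injOn_invSegment, surjOn_invSegment⟩
end

section
/- Every matrix [[a,-b],[0,d]] with a,b,d positive integers, ad = m, and 0 < b ≤ d can be written uniquely as a product [[1,-p],[0,q]]·[[1,0],[0,d₁]]·[[d₂,0],[0,1]], where m = d₁d₂q, d₁,d₂ ≥ 1, 0 < p ≤ q, and gcd(p,q) = 1. Conversely, every quadruple (d₁,d₂,p,q) satisfying these conditions arises from exactly one such matrix (a,b,d) with ad = m and 0 < b ≤ d. -/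
/-!
Multiplying out, `[[1,-p],[0,q]]·[[1,0],[0,d₁]]·[[d₂,0],[0,1]] = [[d₂,-p d₁],[0,q d₁]]`, so the
factorization of `[[a,-b],[0,d]]` amounts to writing `a = d₂`, `b = p d₁`, `d = q d₁` with `p, q`
coprime. This forces `d₁ = gcd(b, d)`, which gives existence and uniqueness of `(d₁, d₂, p, q)`;
the converse direction only reads `(a, b, d)` off the product.
-/

theorem Matrix.upperTriangular_eq_factor_iff {R : Type*} [Ring R] {a b d p q d₁ d₂ : R} :
    !![a, -b; 0, d] = !![1, -p; 0, q] * !![1, 0; 0, d₁] * !![d₂, 0; 0, 1] ↔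
      a = d₂ ∧ b = p * d₁ ∧ d = q * d₁ := by
  simp [and_assoc]

theorem Int.gcd_mul_right_of_isCoprime {p q g : ℤ} (h : IsCoprime p q) (hg : 0 ≤ g) :
    ((p * g).gcd (q * g) : ℤ) = g := by
  rw [Int.gcd_mul_right, Int.isCoprime_iff_gcd_eq_one.mp h, one_mul, Int.natAbs_of_nonneg hg]

theorem Int.eq_of_mul_eq_mul_of_isCoprime {p q g p' q' g' : ℤ} (h : IsCoprime p q)
    (h' : IsCoprime p' q') (hg : 0 ≤ g) (hg' : 0 < g') (hp : p * g = p' * g')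
    (hq : q * g = q' * g') : g = g' ∧ p = p' ∧ q = q' := by
  have hgg' : g = g' := calc
    g = ((p * g).gcd (q * g) : ℤ) := (Int.gcd_mul_right_of_isCoprime h hg).symm
    _ = ((p' * g').gcd (q' * g') : ℤ) := by rw [hp, hq]
    _ = g' := Int.gcd_mul_right_of_isCoprime h' hg'.le
  subst hgg'
  exact ⟨rfl, mul_right_cancel₀ hg'.ne' hp, mul_right_cancel₀ hg'.ne' hq⟩

theorem stmt4_general (m : ℤ) :
    (∀ a b d : ℤ, 1 ≤ a → 0 < b → b ≤ d → a * d = m →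
      ∃! x : ℤ × ℤ × ℤ × ℤ,
        1 ≤ x.1 ∧ 1 ≤ x.2.1 ∧ 0 < x.2.2.1 ∧ x.2.2.1 ≤ x.2.2.2 ∧
        IsCoprime x.2.2.1 x.2.2.2 ∧ x.1 * x.2.1 * x.2.2.2 = m ∧
        !![a, -b; 0, d] =
          !![1, -x.2.2.1; 0, x.2.2.2] * !![1, 0; 0, x.1] * !![x.2.1, 0; 0, 1]) ∧
    (∀ d₁ d₂ p q : ℤ, 1 ≤ d₁ → 1 ≤ d₂ → 0 < p → p ≤ q → IsCoprime p q →
      d₁ * d₂ * q = m →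
      ∃! y : ℤ × ℤ × ℤ,
        1 ≤ y.1 ∧ 0 < y.2.1 ∧ y.2.1 ≤ y.2.2 ∧ y.1 * y.2.2 = m ∧
        !![y.1, -y.2.1; 0, y.2.2] =
          !![1, -p; 0, q] * !![1, 0; 0, d₁] * !![d₂, 0; 0, 1]) := by
  simp only [Matrix.upperTriangular_eq_factor_iff]
  constructor
  · intro a b d ha hb hbd had
    obtain ⟨g, p, q, hg₀, hgcd, rfl, rfl⟩ :=
      Int.exists_gcd_one' (Int.gcd_pos_of_ne_zero_left d hb.ne')
    have hg : (0 : ℤ) < g := by exact_mod_cast hg₀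
    have hcop : IsCoprime p q := Int.isCoprime_iff_gcd_eq_one.mpr hgcd
    refine ⟨(g, a, p, q), ⟨hg, ha, pos_of_mul_pos_left hb hg.le, le_of_mul_le_mul_right hbd hg,
      hcop, by linear_combination had, rfl, rfl, rfl⟩, ?_⟩
    rintro ⟨d₁, d₂, p', q'⟩ ⟨hd₁, -, -, -, hcop', -, rfl, hp, hq⟩
    obtain ⟨rfl, rfl, rfl⟩ := Int.eq_of_mul_eq_mul_of_isCoprime hcop hcop' hg.le hd₁ hp hq
    rfl
  · intro d₁ d₂ p q hd₁ hd₂ hp hpq _ hm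
    refine ⟨(d₂, p * d₁, q * d₁), ⟨hd₂, mul_pos hp (by omega),
      mul_le_mul_of_nonneg_right hpq (by omega), by linear_combination hm,
      rfl, rfl, rfl⟩, ?_⟩
    rintro ⟨a, b, d⟩ ⟨-, -, -, -, rfl, rfl, rfl⟩
    rfl

/-- every matrix `[[a,-b],[0,d]]` with `a,b,d > 0`, `ad = m`,
`0 < b ≤ d` factors uniquely as `[[1,-p],[0,q]]·[[1,0],[0,d₁]]·[[d₂,0],[0,1]]`
with `m = d₁d₂q`, `d₁,d₂ ≥ 1`, `0 < p ≤ q`, `gcd(p,q) = 1`; and conversely each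
such quadruple `(d₁,d₂,p,q)` arises from exactly one triple `(a,b,d)`. -/
theorem stmt4 (m : ℤ) (hm : 0 < m) :
    (∀ a b d : ℤ, 1 ≤ a → 0 < b → b ≤ d → a * d = m →
      ∃! x : ℤ × ℤ × ℤ × ℤ,
        1 ≤ x.1 ∧ 1 ≤ x.2.1 ∧ 0 < x.2.2.1 ∧ x.2.2.1 ≤ x.2.2.2 ∧
        IsCoprime x.2.2.1 x.2.2.2 ∧ x.1 * x.2.1 * x.2.2.2 = m ∧
        !![a, -b; 0, d] =
          !![1, -x.2.2.1; 0, x.2.2.2] * !![1, 0; 0, x.1] * !![x.2.1, 0; 0, 1]) ∧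
    (∀ d₁ d₂ p q : ℤ, 1 ≤ d₁ → 1 ≤ d₂ → 0 < p → p ≤ q → IsCoprime p q →
      d₁ * d₂ * q = m →
      ∃! y : ℤ × ℤ × ℤ,
        1 ≤ y.1 ∧ 0 < y.2.1 ∧ y.2.1 ≤ y.2.2 ∧ y.1 * y.2.2 = m ∧
        !![y.1, -y.2.1; 0, y.2.2] =
          !![1, -p; 0, q] * !![1, 0; 0, d₁] * !![d₂, 0; 0, 1]) :=
  stmt4_general m
end

section
/- Lévy's lemma: Let p < q be coprime positive integers. The set of real numbers ξ ∈ (0, 1/2] such that there exists an index i ≥ 0 with (q_i(ξ), q_{i+1}(ξ)) = (p, q) — where q_i(ξ) denotes the denominator of the i-th continued fraction convergent of ξ — is an interval of length 1/((p+q)·q); moreover such an index i, when it exists, is unique. -/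
/-- The Gauss map `x ↦ {1/x}`. -/
noncomputable def gaussMap (x : ℝ) : ℝ := Int.fract x⁻¹

/-- `partQuotN ξ i = a_{i+1}(ξ)`, the `(i+1)`-st partial quotient of the
continued fraction of `ξ ∈ (0,1)`. -/
noncomputable def partQuotN (ξ : ℝ) (i : ℕ) : ℕ := (⌊(gaussMap^[i] ξ)⁻¹⌋).toNat

/-- Denominators of the continued fraction convergents of `ξ ∈ (0,1)`:
`q_0 = 1`, `q_1 = a_1`, `q_{i+2} = a_{i+2} q_{i+1} + q_i`. -/
noncomputable def convDen (ξ : ℝ) : ℕ → ℕ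
  | 0 => 1
  | 1 => partQuotN ξ 0
  | (i + 2) => partQuotN ξ (i + 1) * convDen ξ (i + 1) + convDen ξ i

/-!
For a word `w = [a₁, …, aₙ]` of positive integers, `t ↦ 1 / (a₁ + 1 / (⋯ + 1 / (aₙ + t)))` is the
Möbius map of the matrix `∏ [[aᵢ, 1], [1, 0]] = [[qₙ, qₙ₋₁], [pₙ, pₙ₋₁]]` of determinant `±1`, so it
maps `[0, 1]` onto an interval of length `1 / (qₙ (qₙ + qₙ₋₁))`, and `(0, 1)` into the numbers whose
expansion starts with `w`. Conversely, when `a₁ ≥ 2` the denominators increase, so the recursion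
`qₖ₊₁ = aₖ₊₁ qₖ + qₖ₋₁` is a division with remainder: the pair `(qₙ₋₁, qₙ) = (p, q)` determines `n`
and `w` by Euclid's algorithm, and coprimality of `p, q` makes such a `w` exist. Hence the set in
question lies between `w`'s open and closed cylinder intervals. For irrational `ξ` all partial
quotients are positive, so the same division argument makes the index unique.
-/

open Set

section GaussMap

lemma partQuotN_succ (ξ : ℝ) (k : ℕ) : partQuotN ξ (k + 1) = partQuotN (gaussMap ξ) k := by
  simp only [partQuotN, Function.iterate_succ_apply]

lemma gaussMap_zero : gaussMap 0 = 0 := by simp [gaussMap]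

lemma gaussMap_mem_Ico (x : ℝ) : gaussMap x ∈ Ico 0 1 :=
  ⟨Int.fract_nonneg _, Int.fract_lt_one _⟩

lemma gaussMap_iterate_mem_Ico {ξ : ℝ} (hξ : ξ ∈ Ico 0 1) : ∀ k, gaussMap^[k] ξ ∈ Ico 0 1
  | 0 => hξ
  | k + 1 => by rw [Function.iterate_succ_apply']; exact gaussMap_mem_Ico _

lemma gaussMap_inv_natCast_add (a : ℕ) {x : ℝ} (hx : x ∈ Ico 0 1) :
    gaussMap ((a : ℝ) + x)⁻¹ = x := by
  rw [gaussMap, inv_inv, add_comm, Int.fract_add_natCast, Int.fract_eq_self.2 hx]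

lemma partQuotN_inv_natCast_add (a : ℕ) {x : ℝ} (hx : x ∈ Ico 0 1) :
    partQuotN ((a : ℝ) + x)⁻¹ 0 = a := by
  rw [partQuotN, Function.iterate_zero_apply, inv_inv, Int.floor_natCast_add,
    Int.floor_eq_zero_iff.2 hx]
  simp

-- Also at `ξ = 0`, because `0⁻¹ = 0`.
lemma inv_partQuotN_zero_add_gaussMap {ξ : ℝ} (hξ : 0 ≤ ξ) :
    ((partQuotN ξ 0 : ℝ) + gaussMap ξ)⁻¹ = ξ := by
  have hfloor : (0 : ℤ) ≤ ⌊ξ⁻¹⌋ := Int.floor_nonneg.2 (inv_nonneg.2 hξ)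
  rw [partQuotN, Function.iterate_zero_apply, gaussMap, Int.fract, ← Int.cast_natCast,
    Int.toNat_of_nonneg hfloor, add_sub_cancel, inv_inv]

lemma partQuotN_eq_zero_iff {ξ : ℝ} (hξ : ξ ∈ Ico 0 1) (k : ℕ) :
    partQuotN ξ k = 0 ↔ gaussMap^[k] ξ = 0 := by
  obtain ⟨h0, h1⟩ := gaussMap_iterate_mem_Ico hξ k
  refine ⟨fun h => ?_, fun h => by simp [partQuotN, h]⟩
  by_contra hne
  have : (1 : ℝ) < (gaussMap^[k] ξ)⁻¹ := one_lt_inv₀ (lt_of_le_of_ne h0 (Ne.symm hne)) |>.2 h1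
  have : (1 : ℤ) ≤ ⌊(gaussMap^[k] ξ)⁻¹⌋ := Int.le_floor.2 (by exact_mod_cast this.le)
  simp only [partQuotN] at h
  omega

lemma partQuotN_eq_zero_of_le {ξ : ℝ} (hξ : ξ ∈ Ico 0 1) {m k : ℕ} (hm : partQuotN ξ m = 0)
    (hmk : m ≤ k) : partQuotN ξ k = 0 := by
  rw [partQuotN_eq_zero_iff hξ] at hm ⊢
  obtain ⟨j, rfl⟩ := Nat.exists_eq_add_of_le hmk
  rw [add_comm, Function.iterate_add_apply, hm, Function.iterate_fixed gaussMap_zero]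

lemma two_le_partQuotN_zero {ξ : ℝ} (hξ : ξ ∈ Ioc 0 (1 / 2)) : 2 ≤ partQuotN ξ 0 := by
  have h2 : (2 : ℝ) ≤ ξ⁻¹ := by
    rw [show (2 : ℝ) = (1 / 2)⁻¹ by norm_num]
    exact inv_anti₀ hξ.1 hξ.2
  have : (2 : ℤ) ≤ ⌊ξ⁻¹⌋ := Int.le_floor.2 (by exact_mod_cast h2)
  simp only [partQuotN, Function.iterate_zero_apply]
  omega

lemma Irrational.gaussMap {x : ℝ} (hx : Irrational x) : Irrational (gaussMap x) :=
  hx.inv.sub_intCast _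

lemma one_le_partQuotN_of_irrational {ξ : ℝ} (hξ : ξ ∈ Ico 0 1) (hirr : Irrational ξ) (k : ℕ) :
    1 ≤ partQuotN ξ k := by
  have hk : Irrational (gaussMap^[k] ξ) := by
    induction k with
    | zero => exact hirr
    | succ k ih => rw [Function.iterate_succ_apply']; exact ih.gaussMap
  exact Nat.one_le_iff_ne_zero.2 fun h => hk.ne_zero ((partQuotN_eq_zero_iff hξ k).1 h)

end GaussMap

section ConvDen

variable {ξ : ℝ}

lemma convDen_add_two (ξ : ℝ) (n : ℕ) :
    convDen ξ (n + 2) = partQuotN ξ (n + 1) * convDen ξ (n + 1) + convDen ξ n := rfl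

lemma convDen_pos_and_lt_succ (h₀ : 2 ≤ partQuotN ξ 0) {n : ℕ}
    (h : ∀ k ≤ n, 1 ≤ partQuotN ξ k) : 0 < convDen ξ n ∧ convDen ξ n < convDen ξ (n + 1) := by
  induction n with
  | zero => exact ⟨Nat.one_pos, h₀⟩
  | succ n ih =>
    obtain ⟨hpos, hlt⟩ := ih fun k hk => h k (by omega)
    have ha := h (n + 1) le_rfl
    refine ⟨hpos.trans hlt, ?_⟩
    rw [convDen_add_two]
    nlinarith

-- `q_n < q_{n+1}` makes `q_{n+2} = a_{n+2} q_{n+1} + q_n` a division with remainder.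
lemma partQuotN_eq_div_and_convDen_eq_mod (h₀ : 2 ≤ partQuotN ξ 0) {n : ℕ}
    (h : ∀ k ≤ n + 1, 1 ≤ partQuotN ξ k) :
    partQuotN ξ (n + 1) = convDen ξ (n + 2) / convDen ξ (n + 1) ∧
      convDen ξ n = convDen ξ (n + 2) % convDen ξ (n + 1) := by
  obtain ⟨hpos, hlt⟩ := convDen_pos_and_lt_succ (n := n) h₀ fun k hk => h k (by omega)
  have hrec : convDen ξ n + convDen ξ (n + 1) * partQuotN ξ (n + 1) = convDen ξ (n + 2) := by
    rw [convDen_add_two]; ring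
  obtain ⟨hdiv, hmod⟩ := (Nat.div_mod_unique (hpos.trans hlt)).2 ⟨hrec, hlt⟩
  exact ⟨hdiv.symm, hmod.symm⟩

lemma eq_and_partQuotN_eq_of_convDen_eq {η : ℝ} (hξ₀ : 2 ≤ partQuotN ξ 0)
    (hη₀ : 2 ≤ partQuotN η 0) :
    ∀ {i j : ℕ}, (∀ k ≤ i, 1 ≤ partQuotN ξ k) → (∀ k ≤ j, 1 ≤ partQuotN η k) →
      convDen ξ i = convDen η j → convDen ξ (i + 1) = convDen η (j + 1) →
      i = j ∧ ∀ k ≤ i, partQuotN ξ k = partQuotN η k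
  | 0, 0, _, _, _, h' => ⟨rfl, fun k hk => by rw [Nat.le_zero.1 hk]; exact h'⟩
  | 0, j + 1, _, hη, h, _ => by
    have := convDen_pos_and_lt_succ (n := j) hη₀ fun k hk => hη k (by omega)
    rw [show convDen ξ 0 = 1 from rfl] at h
    omega
  | i + 1, 0, hξ, _, h, _ => by
    have := convDen_pos_and_lt_succ (n := i) hξ₀ fun k hk => hξ k (by omega)
    rw [show convDen η 0 = 1 from rfl] at h
    omega
  | i + 1, j + 1, hξ, hη, h, h' => by
    obtain ⟨hξdiv, hξmod⟩ := partQuotN_eq_div_and_convDen_eq_mod hξ₀ hξ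
    obtain ⟨hηdiv, hηmod⟩ := partQuotN_eq_div_and_convDen_eq_mod hη₀ hη
    obtain ⟨rfl, hpre⟩ := eq_and_partQuotN_eq_of_convDen_eq hξ₀ hη₀
      (fun k hk => hξ k (by omega)) (fun k hk => hη k (by omega))
      (by rw [hξmod, hηmod, h, h']) h
    refine ⟨rfl, fun k hk => ?_⟩
    rcases Nat.lt_or_eq_of_le hk with hk | rfl
    · exact hpre k (by omega)
    · rw [hξdiv, hηdiv, h, h']

lemma convDen_swap_of_partQuotN_eq_zero {n : ℕ} (h : ∀ k, n < k → partQuotN ξ k = 0) :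
    ∀ k, n ≤ k →
      (convDen ξ k = convDen ξ n ∧ convDen ξ (k + 1) = convDen ξ (n + 1)) ∨
      (convDen ξ k = convDen ξ (n + 1) ∧ convDen ξ (k + 1) = convDen ξ n) := by
  refine Nat.le_induction (Or.inl ⟨rfl, rfl⟩) fun k hk ih => ?_
  rw [convDen_add_two, h (k + 1) (by omega), zero_mul, zero_add]
  exact ih.symm.imp (fun h => ⟨h.2, h.1⟩) fun h => ⟨h.2, h.1⟩

end ConvDen

section Words

-- `[[qₙ, qₙ₋₁], [pₙ, pₙ₋₁]]` for the word `[a₁, …, aₙ]`.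
def cfMatrix (w : List ℕ) : Matrix (Fin 2) (Fin 2) ℕ := (w.map fun a => !![a, 1; 1, 0]).prod

noncomputable def cfMap (w : List ℕ) (t : ℝ) : ℝ := w.foldr (fun a x => ((a : ℝ) + x)⁻¹) t

variable {w : List ℕ}

@[simp] lemma cfMatrix_nil : cfMatrix [] = 1 := rfl

@[simp] lemma cfMatrix_cons_zero_zero (a : ℕ) (w : List ℕ) :
    cfMatrix (a :: w) 0 0 = a * cfMatrix w 0 0 + cfMatrix w 1 0 := by
  simp [cfMatrix, Matrix.mul_apply]

@[simp] lemma cfMatrix_cons_zero_one (a : ℕ) (w : List ℕ) :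
    cfMatrix (a :: w) 0 1 = a * cfMatrix w 0 1 + cfMatrix w 1 1 := by
  simp [cfMatrix, Matrix.mul_apply]

@[simp] lemma cfMatrix_cons_one_zero (a : ℕ) (w : List ℕ) :
    cfMatrix (a :: w) 1 0 = cfMatrix w 0 0 := by
  simp [cfMatrix, Matrix.mul_apply]

@[simp] lemma cfMatrix_cons_one_one (a : ℕ) (w : List ℕ) :
    cfMatrix (a :: w) 1 1 = cfMatrix w 0 1 := by
  simp [cfMatrix, Matrix.mul_apply]

lemma cfMatrix_append_singleton_zero_zero (w : List ℕ) (a : ℕ) :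
    cfMatrix (w ++ [a]) 0 0 = a * cfMatrix w 0 0 + cfMatrix w 0 1 := by
  simp [cfMatrix, Matrix.mul_apply, mul_comm]

lemma cfMatrix_append_singleton_zero_one (w : List ℕ) (a : ℕ) :
    cfMatrix (w ++ [a]) 0 1 = cfMatrix w 0 0 := by
  simp [cfMatrix, Matrix.mul_apply]

lemma cfMap_cons (a : ℕ) (w : List ℕ) (t : ℝ) : cfMap (a :: w) t = ((a : ℝ) + cfMap w t)⁻¹ := rfl

lemma one_le_cfMatrix_zero_zero (hw : ∀ a ∈ w, 1 ≤ a) : 1 ≤ cfMatrix w 0 0 := by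
  induction w with
  | nil => simp
  | cons a w ih =>
    have := ih fun b hb => hw b (List.mem_cons_of_mem a hb)
    have := hw a List.mem_cons_self
    rw [cfMatrix_cons_zero_zero]
    nlinarith

lemma cfMatrix_det (w : List ℕ) :
    (cfMatrix w 0 0 * cfMatrix w 1 1 : ℤ) - cfMatrix w 0 1 * cfMatrix w 1 0 = (-1) ^ w.length := by
  induction w with
  | nil => simp
  | cons a w ih =>
    simp only [cfMatrix_cons_zero_zero, cfMatrix_cons_zero_one, cfMatrix_cons_one_zero,
      cfMatrix_cons_one_one, List.length_cons, pow_succ]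
    push_cast
    linear_combination -ih

end Words

section CfMap

variable {w : List ℕ}

lemma cfMatrix_denom_pos (hw : ∀ a ∈ w, 1 ≤ a) {t : ℝ} (ht : 0 ≤ t) :
    0 < (cfMatrix w 0 0 : ℝ) + cfMatrix w 0 1 * t := by
  have : (1 : ℝ) ≤ cfMatrix w 0 0 := by exact_mod_cast one_le_cfMatrix_zero_zero hw
  positivity

lemma cfMap_eq_div (hw : ∀ a ∈ w, 1 ≤ a) {t : ℝ} (ht : 0 ≤ t) :
    cfMap w t = (cfMatrix w 1 0 + cfMatrix w 1 1 * t) / (cfMatrix w 0 0 + cfMatrix w 0 1 * t) := by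
  induction w with
  | nil => simp [cfMap]
  | cons a w ih =>
    have hw' : ∀ b ∈ w, 1 ≤ b := fun b hb => hw b (List.mem_cons_of_mem a hb)
    have hden := cfMatrix_denom_pos hw' ht
    rw [cfMap_cons, ih hw']
    simp only [cfMatrix_cons_zero_zero, cfMatrix_cons_zero_one, cfMatrix_cons_one_zero,
      cfMatrix_cons_one_one]
    push_cast
    rw [← inv_div]
    field_simp
    ring

lemma cfMap_sub_cfMap (hw : ∀ a ∈ w, 1 ≤ a) {s t : ℝ} (hs : 0 ≤ s) (ht : 0 ≤ t) :
    cfMap w s - cfMap w t = (-1) ^ w.length * (s - t) /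
      ((cfMatrix w 0 0 + cfMatrix w 0 1 * s) * (cfMatrix w 0 0 + cfMatrix w 0 1 * t)) := by
  have hdet : (cfMatrix w 0 0 * cfMatrix w 1 1 : ℝ) - cfMatrix w 0 1 * cfMatrix w 1 0 =
      (-1) ^ w.length := by exact_mod_cast cfMatrix_det w
  rw [cfMap_eq_div hw hs, cfMap_eq_div hw ht,
    div_sub_div _ _ (cfMatrix_denom_pos hw hs).ne' (cfMatrix_denom_pos hw ht).ne']
  congr 1
  linear_combination (s - t) * hdet

lemma abs_cfMap_one_sub_cfMap_zero (hw : ∀ a ∈ w, 1 ≤ a) :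
    |cfMap w 1 - cfMap w 0| = 1 / ((cfMatrix w 0 0 + cfMatrix w 0 1) * cfMatrix w 0 0) := by
  rw [cfMap_sub_cfMap hw zero_le_one le_rfl, abs_div, abs_of_pos
    (mul_pos (cfMatrix_denom_pos hw zero_le_one) (cfMatrix_denom_pos hw le_rfl))]
  simp

lemma cfMap_mem_uIcc (hw : ∀ a ∈ w, 1 ≤ a) {t : ℝ} (ht : t ∈ Icc 0 1) :
    cfMap w t ∈ uIcc (cfMap w 0) (cfMap w 1) := by
  obtain ⟨ht0, ht1⟩ := ht
  have h0 := cfMap_sub_cfMap hw ht0 le_rfl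
  have h1 := cfMap_sub_cfMap hw zero_le_one ht0
  have q0 := div_nonneg (sub_nonneg.2 ht0)
    (mul_pos (cfMatrix_denom_pos hw ht0) (cfMatrix_denom_pos hw le_rfl)).le
  have q1 := div_nonneg (sub_nonneg.2 ht1)
    (mul_pos (cfMatrix_denom_pos hw zero_le_one) (cfMatrix_denom_pos hw ht0)).le
  rw [mem_uIcc]
  rcases neg_one_pow_eq_or ℝ w.length with h | h
  · rw [h, one_mul] at h0 h1
    exact Or.inl ⟨by linarith, by linarith⟩
  · rw [h, neg_one_mul, neg_div] at h0 h1
    exact Or.inr ⟨by linarith, by linarith⟩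

lemma continuousOn_cfMap (hw : ∀ a ∈ w, 1 ≤ a) : ContinuousOn (cfMap w) (Icc 0 1) := by
  refine ContinuousOn.congr (f := fun t => (cfMatrix w 1 0 + cfMatrix w 1 1 * t : ℝ) /
    (cfMatrix w 0 0 + cfMatrix w 0 1 * t)) ?_ fun t ht => cfMap_eq_div hw ht.1
  exact (by fun_prop : Continuous _).continuousOn.div (by fun_prop) fun t ht =>
    (cfMatrix_denom_pos hw ht.1).ne'

lemma Ioo_subset_image_cfMap (hw : ∀ a ∈ w, 1 ≤ a) :
    Ioo (min (cfMap w 0) (cfMap w 1)) (max (cfMap w 0) (cfMap w 1)) ⊆ cfMap w '' Ioo 0 1 := by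
  have h01 : uIcc (0 : ℝ) 1 = Icc 0 1 := uIcc_of_le zero_le_one
  intro y hy
  obtain ⟨t, ht, rfl⟩ := intermediate_value_uIcc (h01 ▸ continuousOn_cfMap hw)
    (Ioo_subset_Icc_self hy)
  rw [h01] at ht
  have h0 : t ≠ 0 := by rintro rfl; simp at hy; linarith
  have h1 : t ≠ 1 := by rintro rfl; simp at hy; linarith
  exact ⟨t, ⟨lt_of_le_of_ne ht.1 h0.symm, lt_of_le_of_ne ht.2 h1⟩, rfl⟩

lemma cfMap_mem_Ioo (hw : ∀ a ∈ w, 1 ≤ a) {t : ℝ} (ht : t ∈ Ioo 0 1) : cfMap w t ∈ Ioo 0 1 := by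
  induction w with
  | nil => exact ht
  | cons a w ih =>
    have hx := ih fun b hb => hw b (List.mem_cons_of_mem a hb)
    have ha : (1 : ℝ) ≤ a := by exact_mod_cast hw a List.mem_cons_self
    rw [cfMap_cons]
    exact ⟨inv_pos.2 (by linarith [hx.1]), inv_lt_one_of_one_lt₀ (by linarith [hx.1])⟩

lemma cfMap_cons_mem_Ioc {a : ℕ} (ha : 2 ≤ a) (hw : ∀ b ∈ w, 1 ≤ b) {t : ℝ} (ht : t ∈ Ioo 0 1) :
    cfMap (a :: w) t ∈ Ioc 0 (1 / 2) := by
  have hx := cfMap_mem_Ioo hw ht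
  have ha : (2 : ℝ) ≤ a := by exact_mod_cast ha
  rw [cfMap_cons]
  refine ⟨inv_pos.2 (by linarith [hx.1]), ?_⟩
  rw [one_div]
  exact inv_anti₀ two_pos (by linarith [hx.1])

end CfMap

section CfPrefix

noncomputable def cfPrefix (ξ : ℝ) (n : ℕ) : List ℕ := List.ofFn fun k : Fin n => partQuotN ξ k

lemma cfPrefix_succ (ξ : ℝ) (n : ℕ) :
    cfPrefix ξ (n + 1) = partQuotN ξ 0 :: cfPrefix (gaussMap ξ) n := by
  simp [cfPrefix, List.ofFn_succ, partQuotN_succ]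

lemma cfPrefix_succ' (ξ : ℝ) (n : ℕ) : cfPrefix ξ (n + 1) = cfPrefix ξ n ++ [partQuotN ξ n] := by
  rw [cfPrefix, cfPrefix, List.ofFn_succ', List.concat_eq_append]
  rfl

lemma cfMap_cfPrefix {ξ : ℝ} (hξ : 0 ≤ ξ) (n : ℕ) : cfMap (cfPrefix ξ n) (gaussMap^[n] ξ) = ξ := by
  induction n generalizing ξ with
  | zero => rfl
  | succ n ih =>
    rw [cfPrefix_succ, cfMap_cons, Function.iterate_succ_apply, ih (gaussMap_mem_Ico ξ).1,
      inv_partQuotN_zero_add_gaussMap hξ]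

lemma cfPrefix_cfMap {w : List ℕ} (hw : ∀ a ∈ w, 1 ≤ a) {t : ℝ} (ht : t ∈ Ioo 0 1) :
    cfPrefix (cfMap w t) w.length = w := by
  induction w with
  | nil => rfl
  | cons a w ih =>
    have hw' : ∀ b ∈ w, 1 ≤ b := fun b hb => hw b (List.mem_cons_of_mem a hb)
    have hx : cfMap w t ∈ Ico 0 1 := Ioo_subset_Ico_self (cfMap_mem_Ioo hw' ht)
    rw [List.length_cons, cfPrefix_succ, cfMap_cons, partQuotN_inv_natCast_add a hx,
      gaussMap_inv_natCast_add a hx, ih hw']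

lemma partQuotN_cfMap {w : List ℕ} (hw : ∀ a ∈ w, 1 ≤ a) {t : ℝ} (ht : t ∈ Ioo 0 1) {k : ℕ}
    (hk : k < w.length) : partQuotN (cfMap w t) k = w[k] := by
  have hlen : k < (cfPrefix (cfMap w t) w.length).length := by simpa [cfPrefix]
  rw [← List.getElem_of_eq (cfPrefix_cfMap hw ht) hlen]
  simp [cfPrefix]

lemma cfMatrix_cfPrefix (ξ : ℝ) (n : ℕ) :
    cfMatrix (cfPrefix ξ (n + 1)) 0 0 = convDen ξ (n + 1) ∧
      cfMatrix (cfPrefix ξ (n + 1)) 0 1 = convDen ξ n := by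
  induction n with
  | zero => simp [cfPrefix, convDen]
  | succ n ih =>
    rw [cfPrefix_succ' ξ (n + 1), cfMatrix_append_singleton_zero_zero,
      cfMatrix_append_singleton_zero_one, ih.1, ih.2, convDen_add_two]
    exact ⟨rfl, rfl⟩

end CfPrefix

section LevySet

def levySet (p q : ℕ) : Set ℝ :=
  {ξ | ξ ∈ Ioc 0 (1 / 2) ∧ ∃ i, convDen ξ i = p ∧ convDen ξ (i + 1) = q}

-- Euclid's algorithm: the last partial quotient is `q / p`, and `(q % p, p)` is the previous pair.
lemma exists_cfMatrix_eq {p q : ℕ} (hp : 0 < p) (hpq : p < q) (hco : Nat.Coprime p q) :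
    ∃ a w, 2 ≤ a ∧ (∀ b ∈ w, 1 ≤ b) ∧ cfMatrix (a :: w) 0 0 = q ∧ cfMatrix (a :: w) 0 1 = p := by
  induction p using Nat.strong_induction_on generalizing q with
  | _ p ih =>
    obtain rfl | hp2 : p = 1 ∨ 2 ≤ p := by omega
    · exact ⟨q, [], hpq, by simp, by simp, by simp⟩
    have hr : 0 < q % p := Nat.pos_of_ne_zero fun h =>
      Nat.Coprime.eq_one_of_dvd hco (Nat.dvd_of_mod_eq_zero h) |>.not_gt (by omega) |>.elim
    have hco' : Nat.Coprime (q % p) p := by rwa [Nat.Coprime, ← Nat.gcd_rec]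
    obtain ⟨a, w, ha, hw, h00, h01⟩ := ih (q % p) (Nat.mod_lt q hp) hr (Nat.mod_lt q hp) hco'
    refine ⟨a, w ++ [q / p], ha, ?_, ?_, ?_⟩
    · simp only [List.mem_append, List.mem_singleton]
      rintro b (hb | rfl)
      exacts [hw b hb, Nat.div_pos hpq.le hp]
    · rw [← List.cons_append, cfMatrix_append_singleton_zero_zero, h00, h01, mul_comm,
        Nat.div_add_mod]
    · rw [← List.cons_append, cfMatrix_append_singleton_zero_one, h00]

lemma convDen_cfMap_cons {a : ℕ} {w : List ℕ} (ha : 1 ≤ a) (hw : ∀ b ∈ w, 1 ≤ b) {t : ℝ}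
    (ht : t ∈ Ioo 0 1) :
    convDen (cfMap (a :: w) t) w.length = cfMatrix (a :: w) 0 1 ∧
      convDen (cfMap (a :: w) t) (w.length + 1) = cfMatrix (a :: w) 0 0 := by
  have hpre := cfPrefix_cfMap (List.forall_mem_cons.2 ⟨ha, hw⟩) ht
  obtain ⟨h00, h01⟩ := cfMatrix_cfPrefix (cfMap (a :: w) t) w.length
  rw [List.length_cons] at hpre
  rw [hpre] at h00 h01
  exact ⟨h01.symm, h00.symm⟩

lemma cfMap_mem_levySet {a : ℕ} {w : List ℕ} (ha : 2 ≤ a) (hw : ∀ b ∈ w, 1 ≤ b) {t : ℝ}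
    (ht : t ∈ Ioo 0 1) : cfMap (a :: w) t ∈ levySet (cfMatrix (a :: w) 0 1) (cfMatrix (a :: w) 0 0) :=
  ⟨cfMap_cons_mem_Ioc ha hw ht, w.length, convDen_cfMap_cons (one_le_two.trans ha) hw ht⟩

-- A rational `ξ` has partial quotients `0` from some index on, after which consecutive
-- denominators just swap; since `p < q`, the pair `(p, q)` already occurs before the zeros.
lemma exists_index_one_le_partQuotN {ξ : ℝ} (hξ : ξ ∈ Ioc 0 (1 / 2)) {p q i : ℕ} (hpq : p < q)
    (hi : convDen ξ i = p) (hi' : convDen ξ (i + 1) = q) :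
    ∃ n, (∀ k ≤ n, 1 ≤ partQuotN ξ k) ∧ convDen ξ n = p ∧ convDen ξ (n + 1) = q := by
  by_cases h : ∀ k ≤ i, 1 ≤ partQuotN ξ k
  · exact ⟨i, h, hi, hi'⟩
  push Not at h
  obtain ⟨k, hki, hk⟩ := h
  have hξ' : ξ ∈ Ico 0 1 := ⟨hξ.1.le, hξ.2.trans_lt (by norm_num)⟩
  have hex : ∃ m, partQuotN ξ m = 0 := ⟨k, by omega⟩
  have h₀ := two_le_partQuotN_zero hξ
  obtain ⟨n, hn⟩ : ∃ n, Nat.find hex = n + 1 :=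
    Nat.exists_eq_add_one.2 (Nat.pos_of_ne_zero fun h => by have := Nat.find_spec hex; simp_all)
  have hpos : ∀ k ≤ n, 1 ≤ partQuotN ξ k := fun k hk =>
    Nat.one_le_iff_ne_zero.2 (Nat.find_min hex (by omega))
  have hzero : ∀ k, n < k → partQuotN ξ k = 0 := fun k hk =>
    partQuotN_eq_zero_of_le hξ' (Nat.find_spec hex) (by omega)
  have hni : n ≤ i := by have := Nat.find_min' hex (m := k) (by omega); omega
  have hlt := (convDen_pos_and_lt_succ h₀ hpos).2
  rcases convDen_swap_of_partQuotN_eq_zero hzero i hni with ⟨h1, h2⟩ | ⟨h1, h2⟩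
  · exact ⟨n, hpos, h1 ▸ hi, h2 ▸ hi'⟩
  · omega

lemma levySet_subset_image_cfMap {a : ℕ} {w : List ℕ} (ha : 2 ≤ a) (hw : ∀ b ∈ w, 1 ≤ b)
    (hlt : cfMatrix (a :: w) 0 1 < cfMatrix (a :: w) 0 0) :
    levySet (cfMatrix (a :: w) 0 1) (cfMatrix (a :: w) 0 0) ⊆ cfMap (a :: w) '' Icc 0 1 := by
  rintro ξ ⟨hξ, i, hi, hi'⟩
  obtain ⟨n, hn, hp, hq⟩ := exists_index_one_le_partQuotN hξ hlt hi hi'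
  have hw' : ∀ b ∈ a :: w, 1 ≤ b := List.forall_mem_cons.2 ⟨one_le_two.trans ha, hw⟩
  have ht : (1 / 2 : ℝ) ∈ Ioo 0 1 := by norm_num
  have hη₀ : partQuotN (cfMap (a :: w) (1 / 2)) 0 = a := partQuotN_cfMap hw' ht (by simp)
  have hη : ∀ k ≤ w.length, 1 ≤ partQuotN (cfMap (a :: w) (1 / 2)) k := fun k hk => by
    rw [partQuotN_cfMap hw' ht (by simp; omega)]
    exact hw' _ (List.getElem_mem _)
  obtain ⟨hη₁, hη₂⟩ := convDen_cfMap_cons (one_le_two.trans ha) hw ht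
  obtain ⟨rfl, heq⟩ := eq_and_partQuotN_eq_of_convDen_eq (two_le_partQuotN_zero hξ)
    (hη₀.symm ▸ ha) hn hη (hp.trans hη₁.symm) (hq.trans hη₂.symm)
  have hpre : cfPrefix ξ (w.length + 1) = a :: w := by
    rw [← cfPrefix_cfMap hw' ht]
    simp only [cfPrefix, List.length_cons]
    congr 1
    funext k
    exact heq k (by omega)
  refine ⟨gaussMap^[w.length + 1] ξ, Ico_subset_Icc_self (gaussMap_iterate_mem_Ico
    ⟨hξ.1.le, hξ.2.trans_lt (by norm_num)⟩ _), ?_⟩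
  rw [← hpre, cfMap_cfPrefix hξ.1.le]

end LevySet

/-- Lévy's lemma: for coprime positive integers `p < q`, the set
of `ξ ∈ (0,1/2]` admitting an index `i` with `(q_i(ξ), q_{i+1}(ξ)) = (p,q)` is
an interval of length `1/((p+q)q)`; moreover such an index is unique. -/
theorem stmt9 (p q : ℕ) (hp : 0 < p) (hpq : p < q) (hco : Nat.Coprime p q) :
    (∃ a b : ℝ,
      b - a = 1 / (((p : ℝ) + q) * q) ∧
      Set.Ioo a b ⊆
        {ξ : ℝ | ξ ∈ Set.Ioc (0 : ℝ) (1 / 2) ∧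
          ∃ i : ℕ, convDen ξ i = p ∧ convDen ξ (i + 1) = q} ∧
      {ξ : ℝ | ξ ∈ Set.Ioc (0 : ℝ) (1 / 2) ∧
          ∃ i : ℕ, convDen ξ i = p ∧ convDen ξ (i + 1) = q} ⊆ Set.Icc a b) ∧
    (∀ ξ : ℝ, ξ ∈ Set.Ioc (0 : ℝ) (1 / 2) → Irrational ξ →
      ∀ i j : ℕ, (convDen ξ i = p ∧ convDen ξ (i + 1) = q) →
        (convDen ξ j = p ∧ convDen ξ (j + 1) = q) → i = j) := by
  refine ⟨?_, fun ξ hξ hirr i j hi hj => ?_⟩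
  · obtain ⟨a, w, ha, hw, rfl, rfl⟩ := exists_cfMatrix_eq hp hpq hco
    have hw' : ∀ b ∈ a :: w, 1 ≤ b := List.forall_mem_cons.2 ⟨one_le_two.trans ha, hw⟩
    refine ⟨min (cfMap (a :: w) 0) (cfMap (a :: w) 1), max (cfMap (a :: w) 0) (cfMap (a :: w) 1),
      ?_, fun y hy => ?_, fun ξ hξ => ?_⟩
    · rw [max_sub_min_eq_abs, abs_cfMap_one_sub_cfMap_zero hw', add_comm]
    · obtain ⟨t, ht, rfl⟩ := Ioo_subset_image_cfMap hw' hy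
      exact cfMap_mem_levySet ha hw ht
    · obtain ⟨t, ht, rfl⟩ := levySet_subset_image_cfMap ha hw hpq hξ
      exact cfMap_mem_uIcc hw' ht
  · have hpos := one_le_partQuotN_of_irrational ⟨hξ.1.le, hξ.2.trans_lt (by norm_num)⟩ hirr
    have h₀ := two_le_partQuotN_zero hξ
    exact (eq_and_partQuotN_eq_of_convDen_eq h₀ h₀ (fun k _ => hpos k) (fun k _ => hpos k)
      (hi.1.trans hj.1.symm) (hi.2.trans hj.2.symm)).1
end

section
/- For the normalized continued-fraction convergents b_k/d_k of a rational number b/d ∈ (0,1) (with b_{-1}/d_{-1} = 1/0 and b_0/d_0 = 0/1), each matrix g_k := [[d_{k-ε_{k+1}}, b_{k-ε_{k+1}}],[d_{k-ε_k}, b_{k-ε_k}]], where ε_k = 1 for even k and ε_k = 0 for odd k, has determinant ±1 and all entries nonnegative; moreover the segment (-1)^k·(−b_{k-ε_k}/d_{k-ε_k}, −b_{k-ε_{k+1}}/d_{k-ε_{k+1}}) equals (g_k⁻¹·∞, g_k⁻¹·0), so the sequence of segments I_0, I_1, …, I_{n(b/d)} forms a chain of left primitive segments connecting −∞ to −b/d.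 -/
/-- `ε_k = 1` for even `k`, `0` for odd `k`. -/
def epsf (k : ℕ) : ℕ := if Even k then 1 else 0

/-- The matrix `g_k = [[d_{k-ε_{k+1}}, b_{k-ε_{k+1}}],[d_{k-ε_k}, b_{k-ε_k}]]`,
where `B j = b_{j-1}` and `D j = d_{j-1}` are the shifted convergent
numerators/denominators. -/
def gSeg (B D : ℕ → ℤ) (k : ℕ) : Matrix (Fin 2) (Fin 2) ℤ :=
  !![D (k + 1 - epsf (k + 1)), B (k + 1 - epsf (k + 1));
     D (k + 1 - epsf k), B (k + 1 - epsf k)]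

/-- The point `-b_{j-1}/d_{j-1} ∈ P¹(ℚ)` (equal to `∞` when `d_{j-1} = 0`). -/
def cpt (B D : ℕ → ℤ) (j : ℕ) : Option ℚ :=
  if D j = 0 then none else some (-(B j : ℚ) / (D j : ℚ))

/-- for the convergents `b_k/d_k` of a rational `b/d ∈ (0,1)`
(with `b_{-1}/d_{-1} = 1/0`, `b_0/d_0 = 0/1`, encoded by shifted sequences
`B, D` with `B j = b_{j-1}`, `D j = d_{j-1}`), each `g_k` has determinant `±1`
and nonnegative entries, the oriented segment `(-1)^k·I_k` equals
`(g_k⁻¹·∞, g_k⁻¹·0)`, and the segments `I_0, …, I_n` form a chain of left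
primitive segments connecting `-∞` to `-b/d`. -/
theorem stmt16 (b d : ℤ) (hb : 0 < b) (hbd : b < d) (hco : IsCoprime b d)
    (n : ℕ) (aa B D : ℕ → ℤ)
    (haa : ∀ k, k < n → 1 ≤ aa k)
    (hB0 : B 0 = 1) (hB1 : B 1 = 0) (hD0 : D 0 = 0) (hD1 : D 1 = 1)
    (hBrec : ∀ k, k < n → B (k + 2) = aa k * B (k + 1) + B k)
    (hDrec : ∀ k, k < n → D (k + 2) = aa k * D (k + 1) + D k)
    (hBn : B (n + 1) = b) (hDn : D (n + 1) = d) :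
    (∀ k, k ≤ n →
      ((gSeg B D k).det = 1 ∨ (gSeg B D k).det = -1) ∧
      (∀ i j, 0 ≤ gSeg B D k i j) ∧
      (flin (gSeg B D k).adjugate none, flin (gSeg B D k).adjugate (some 0)) =
        (if Even k then (cpt B D k, cpt B D (k + 1))
          else (cpt B D (k + 1), cpt B D k))) ∧
    -- the chain of segments `I_k` (with endpoints `cpt k`, `cpt (k+1)`)
    -- connects `-∞` to `-b/d`:
    cpt B D 0 = none ∧ cpt B D (n + 1) = some (-(b : ℚ) / (d : ℚ)) := by

  have hBnn : ∀ k, k ≤ n → 0 ≤ B k ∧ 0 ≤ B (k + 1) := by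
    intro k
    induction k with
    | zero => intro _; exact ⟨by rw [hB0]; norm_num, by rw [hB1]⟩
    | succ m ih =>
      intro hm
      obtain ⟨h1, h2⟩ := ih (le_of_lt hm)
      refine ⟨h2, ?_⟩
      rw [hBrec m hm]
      have := haa m hm
      nlinarith
  have hDnn : ∀ k, k ≤ n → 0 ≤ D k ∧ 0 ≤ D (k + 1) := by
    intro k
    induction k with
    | zero => intro _; exact ⟨by rw [hD0], by rw [hD1]; norm_num⟩
    | succ m ih =>
      intro hm
      obtain ⟨h1, h2⟩ := ih (le_of_lt hm)
      refine ⟨h2, ?_⟩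
      rw [hDrec m hm]
      have := haa m hm
      nlinarith
  have hP : ∀ k, k ≤ n → D (k + 1) * B k - B (k + 1) * D k = (-1 : ℤ) ^ k := by
    intro k
    induction k with
    | zero => intro _; rw [hB0, hB1, hD0, hD1]; norm_num
    | succ m ih =>
      intro hm
      have ihm := ih (le_of_lt hm)
      rw [hBrec m hm, hDrec m hm, pow_succ]
      linear_combination (-1 : ℤ) * ihm
  refine ⟨?_, by simp [cpt, hD0], ?_⟩
  · intro k hk
    obtain ⟨hb1, hb2⟩ := hBnn k hk
    obtain ⟨hd1, hd2⟩ := hDnn k hk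
    have hp := hP k hk
    rcases Nat.even_or_odd k with he | ho
    · have e1 : epsf k = 1 := by simp [epsf, he]
      have e2 : epsf (k + 1) = 0 := by simp [epsf, Nat.even_add_one, he]
      have hg : gSeg B D k = !![D (k + 1), B (k + 1); D k, B k] := by
        rw [gSeg, e1, e2]; norm_num
      refine ⟨Or.inl ?_, ?_, ?_⟩
      · rw [hg, Matrix.det_fin_two_of, hp, he.neg_one_pow]
      · intro i j
        rw [hg]
        fin_cases i <;> fin_cases j <;> simpa
      · rw [hg, Matrix.adjugate_fin_two_of, if_pos he]
        refine Prod.ext ?_ ?_ <;> simp only [flin, cpt]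
        · by_cases h0 : D k = 0 <;>
            simp [h0, div_neg, neg_div]
        · by_cases h0 : D (k + 1) = 0 <;>
            simp [h0, div_neg, neg_div]
    · have e1 : epsf k = 0 := by simp [epsf, Nat.not_even_iff_odd.mpr ho]
      have e2 : epsf (k + 1) = 1 := by
        simp [epsf, Nat.even_add_one, Nat.not_even_iff_odd.mpr ho]
      have hg : gSeg B D k = !![D k, B k; D (k + 1), B (k + 1)] := by
        rw [gSeg, e1, e2]; norm_num
      have hne : ¬ Even k := Nat.not_even_iff_odd.mpr ho
      refine ⟨Or.inl ?_, ?_, ?_⟩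
      · rw [hg, Matrix.det_fin_two_of]
        have : (-1 : ℤ) ^ k = -1 := ho.neg_one_pow
        linarith [hp, this.symm ▸ hp]
      · intro i j
        rw [hg]
        fin_cases i <;> fin_cases j <;> simpa
      · rw [hg, Matrix.adjugate_fin_two_of, if_neg hne]
        refine Prod.ext ?_ ?_ <;> simp only [flin, cpt]
        · by_cases h0 : D (k + 1) = 0 <;>
            simp [h0, div_neg, neg_div]
        · by_cases h0 : D k = 0 <;>
            simp [h0, div_neg, neg_div]
  · have hd0 : d ≠ 0 := by omega
    simp [cpt, hBn, hDn, hd0]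
end
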